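/- arXiv:2401.09164 — 4 statements merged into one kernel-verified Lean document; each statement's English description precedes it below -/
import Mathlib

section
/- Let $\varphi\in(0,\pi/2)$, $b\in S^{n-1}$, $r\in(0,\cos\varphi)$, $a\in(0,1)$. Then the Euclidean distance from the truncated cone $R(b,\varphi,ar,r)$ to the unit sphere $S^{n-1}$ satisfies $d(R(b,\varphi,ar,r),\partial\mathbb{B}^n) \geq \frac{ar(2\cos\varphi - ar)}{2+ar}$. -/
/-!
Write `t = ‖b - x‖`. Since `b` is a unit vector, `‖x‖² = 1 - 2⟪b, b - x⟫ + t²`, so the cone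
condition `t cos φ < ⟪b, b - x⟫` gives `1 - ‖x‖² > t(2 cos φ - t)`. On the shell `ar < t < r < cos φ`
the quadratic `t(2 cos φ - t)` increases, hence exceeds `m = ar(2 cos φ - ar) ≥ 0`, and
`1 - ‖x‖ ≥ (1 - ‖x‖²)/2 ≥ m/2 ≥ m/(2 + ar)`.
-/

open Real Metric

section InnerProductSpace

variable {E : Type*} [NormedAddCommGroup E] [InnerProductSpace ℝ E]

lemma norm_sq_eq_of_norm_eq_one {b : E} (hb : ‖b‖ = 1) (x : E) :
    ‖x‖ ^ 2 = 1 - 2 * inner ℝ b (b - x) + ‖b - x‖ ^ 2 := by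
  have h := norm_sub_sq_real b (b - x)
  rw [sub_sub_cancel, hb] at h
  rw [h]
  ring

lemma norm_sq_lt_of_mem_cone {b x : E} {c : ℝ} (hb : ‖b‖ = 1)
    (hx : ‖b - x‖ * c < inner ℝ b (b - x)) :
    ‖x‖ ^ 2 < 1 - ‖b - x‖ * (2 * c - ‖b - x‖) := by
  rw [norm_sq_eq_of_norm_eq_one hb x]
  linarith

end InnerProductSpace

lemma mul_two_mul_sub_le_mul_two_mul_sub {s t c : ℝ} (hst : s ≤ t) (htc : t ≤ c) :
    s * (2 * c - s) ≤ t * (2 * c - t) := by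
  nlinarith

lemma half_le_one_sub_of_sq_le_one_sub {y m : ℝ} (hy : 0 ≤ y) (hm : 0 ≤ m)
    (h : y ^ 2 ≤ 1 - m) : m / 2 ≤ 1 - y := by
  nlinarith

theorem stmt2_general (n : ℕ) (b : EuclideanSpace ℝ (Fin n)) (hb : ‖b‖ = 1)
    (φ r a : ℝ) (hr : r ∈ Set.Ioo 0 (Real.cos φ))
    (ha : a ∈ Set.Ioo (0 : ℝ) 1)
    (C : Set (EuclideanSpace ℝ (Fin n)))
    (hC : C = {x | ‖b - x‖ * Real.cos φ < inner ℝ b (b - x)} ∩ ball b (Real.cos φ))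
    (R : Set (EuclideanSpace ℝ (Fin n)))
    (hR : R = (ball b r \ closedBall b (a * r)) ∩ C) :
    ∀ x ∈ R, a * r * (2 * Real.cos φ - a * r) / (2 + a * r) ≤ 1 - ‖x‖ := by
  intro x hx
  subst hR hC
  obtain ⟨⟨hlt, hgt⟩, hcone, -⟩ := hx
  rw [mem_ball, dist_comm, dist_eq_norm] at hlt
  rw [mem_closedBall, dist_comm, dist_eq_norm, not_le] at hgt
  have har : 0 < a * r := mul_pos ha.1 hr.1
  have hm : 0 ≤ a * r * (2 * Real.cos φ - a * r) := by nlinarith [hr.2]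
  have hnorm := norm_sq_lt_of_mem_cone hb hcone
  have hgrow := mul_two_mul_sub_le_mul_two_mul_sub hgt.le (hlt.trans hr.2).le
  calc a * r * (2 * Real.cos φ - a * r) / (2 + a * r)
      ≤ a * r * (2 * Real.cos φ - a * r) / 2 := by gcongr; linarith
    _ ≤ 1 - ‖x‖ := half_le_one_sub_of_sq_le_one_sub (norm_nonneg x) hm (by linarith)

/-- The Euclidean distance from the truncated cone `R(b,φ,ar,r)` to the unit sphere
`∂𝔹ⁿ` is at least `ar(2cos φ − ar)/(2+ar)`; here `d(x, ∂𝔹ⁿ) = 1 − |x|`. -/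
theorem stmt2 (n : ℕ) (hn : 2 ≤ n) (b : EuclideanSpace ℝ (Fin n)) (hb : ‖b‖ = 1)
    (φ r a : ℝ) (hφ : φ ∈ Set.Ioo 0 (π / 2)) (hr : r ∈ Set.Ioo 0 (Real.cos φ))
    (ha : a ∈ Set.Ioo (0 : ℝ) 1)
    (C : Set (EuclideanSpace ℝ (Fin n)))
    (hC : C = {x | ‖b - x‖ * Real.cos φ < inner ℝ b (b - x)} ∩ ball b (Real.cos φ))
    (R : Set (EuclideanSpace ℝ (Fin n)))
    (hR : R = (ball b r \ closedBall b (a * r)) ∩ C) :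
    ∀ x ∈ R, a * r * (2 * Real.cos φ - a * r) / (2 + a * r) ≤ 1 - ‖x‖ :=
  stmt2_general n b hb φ r a hr ha C hC R hR
end

section
/- Let $\varphi\in(0,\pi/2)$, $b\in S^{n-1}$, $r\in(0,\cos\varphi)$, $a\in(0,1)$. Then the diameter of $R(b,\varphi,ar,r)$ in the distance ratio metric $j_{\mathbb{B}^n}$ satisfies $$\sup_{x,y\in R(b,\varphi,ar,r)} \log\Big(1+\frac{|x-y|}{\min\{1-|x|,1-|y|\}}\Big) \leq \log\Big(1+\frac{(2+ar)u(a,\varphi)}{a(2\cos\varphi - ar)}\Big),$$ where $u(a,\varphi)=\sqrt{(1+a)^2\tan^2\varphi+(1-a)^2}$. -/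
/-! For `x, y ∈ R` put `s = ‖b - x‖`, `t = ‖b - y‖ ∈ [ar, r]`. The vectors `b - x`, `b - y` make
angles `< φ` with `b`, hence an angle `< 2φ` with each other, and the law of cosines gives
`‖x - y‖² ≤ s² + t² - 2st cos 2φ`. This is convex in `s` and in `t`, so its maximum over the box
`[ar, r]²` is attained at a corner, where it is at most `(ru)²`. On the other side,
`‖x‖² = 1 - 2⟪b, b - x⟫ + s² ≤ 1 - s (2 cos φ - s)`, so `1 - ‖x‖ ≥ ar (2 cos φ - ar) / 2`. -/

open Real Metric InnerProductGeometry RealInnerProductSpace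

theorem sq_add_mul_le_of_mem_Icc {l h x A B : ℝ} (hx : x ∈ Set.Icc l h)
    (hl : l ^ 2 + A * l ≤ B) (hh : h ^ 2 + A * h ≤ B) : x ^ 2 + A * x ≤ B := by
  obtain ⟨hlx, hxh⟩ := hx
  rcases hlx.eq_or_lt with rfl | hlx
  · exact hl
  have hlh : 0 < h - l := by linarith
  refine le_of_mul_le_mul_left ?_ hlh
  nlinarith [mul_nonneg (sub_nonneg.2 hlx.le) (sub_nonneg.2 hxh),
    mul_nonneg (sub_nonneg.2 hxh) (sub_nonneg.2 hl),
    mul_nonneg (sub_nonneg.2 hlx.le) (sub_nonneg.2 hh)]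

theorem sq_add_sq_sub_le_of_mem_Icc {l h k B s t : ℝ} (hs : s ∈ Set.Icc l h)
    (ht : t ∈ Set.Icc l h) (hll : l ^ 2 + l ^ 2 - 2 * k * l * l ≤ B)
    (hlh : l ^ 2 + h ^ 2 - 2 * k * l * h ≤ B) (hhh : h ^ 2 + h ^ 2 - 2 * k * h * h ≤ B) :
    s ^ 2 + t ^ 2 - 2 * k * s * t ≤ B := by
  have convex_in_first : ∀ u ∈ Set.Icc l h, ∀ v,
      l ^ 2 + v ^ 2 - 2 * k * l * v ≤ B → h ^ 2 + v ^ 2 - 2 * k * h * v ≤ B →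
      u ^ 2 + v ^ 2 - 2 * k * u * v ≤ B := by
    intro u hu v hl hh
    have := sq_add_mul_le_of_mem_Icc (A := -2 * k * v) (B := B - v ^ 2) hu
      (by linarith) (by linarith)
    linarith
  have hsl := convex_in_first s hs l hll (by linarith)
  have hsh := convex_in_first s hs h hlh hhh
  have := convex_in_first t ht s (by linarith) (by linarith)
  linarith

theorem sq_add_sq_sub_mul_cos_two_mul_le {a r φ s t : ℝ} (ha : 0 ≤ a) (ha1 : a ≤ 1)
    (hφ : 0 < cos φ) (hs : s ∈ Set.Icc (a * r) r) (ht : t ∈ Set.Icc (a * r) r) :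
    s ^ 2 + t ^ 2 - 2 * cos (2 * φ) * s * t ≤ r ^ 2 * ((1 + a) ^ 2 * tan φ ^ 2 + (1 - a) ^ 2) := by
  have hB : r ^ 2 * ((1 + a) ^ 2 * tan φ ^ 2 + (1 - a) ^ 2) =
      r ^ 2 * ((1 + a) ^ 2 * (1 - cos φ ^ 2) + (1 - a) ^ 2 * cos φ ^ 2) / cos φ ^ 2 := by
    rw [tan_eq_sin_div_cos, div_pow, sin_sq]
    field_simp
  rw [hB, cos_two_mul]
  set c := cos φ
  have hc2 : 0 < c ^ 2 := by positivity
  have hc21 : c ^ 2 ≤ 1 := pow_le_one₀ hφ.le (cos_le_one φ)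
  have hdiag : ∀ v, v ^ 2 ≤ r ^ 2 → (v ^ 2 + v ^ 2 - 2 * (2 * c ^ 2 - 1) * v * v) * c ^ 2 ≤
      r ^ 2 * ((1 + a) ^ 2 * (1 - c ^ 2) + (1 - a) ^ 2 * c ^ 2) := fun v hv => by
    nlinarith [mul_nonneg (sq_nonneg r) (sq_nonneg (1 + a - 2 * c ^ 2)),
      mul_le_mul_of_nonneg_right hv (mul_nonneg hc2.le (sub_nonneg.2 hc21))]
  apply sq_add_sq_sub_le_of_mem_Icc hs ht <;> rw [le_div_iff₀ hc2]
  · refine hdiag _ ?_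
    rw [mul_pow]
    exact mul_le_of_le_one_left (sq_nonneg r) (pow_le_one₀ ha ha1)
  · nlinarith [mul_nonneg (mul_nonneg (sq_nonneg r) (sub_nonneg.2 hc21)) (sub_nonneg.2 hc21),
      mul_nonneg (mul_nonneg (sq_nonneg r) (sub_nonneg.2 hc21)) (mul_nonneg ha hc2.le),
      mul_nonneg (mul_nonneg (sq_nonneg r) (sub_nonneg.2 hc21)) (sq_nonneg (1 - a))]
  · exact hdiag _ le_rfl

section Cone

variable {F : Type*} [NormedAddCommGroup F] [InnerProductSpace ℝ F]

theorem angle_lt_of_norm_mul_cos_lt_inner {b p : F} {φ : ℝ} (hb : ‖b‖ = 1) (hφ : 0 ≤ φ)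
    (h : ‖p‖ * cos φ < ⟪b, p⟫) : angle b p < φ := by
  have hp : p ≠ 0 := by rintro rfl; simp at h
  by_contra! hle
  have hcos : cos φ < cos (angle b p) := by
    rw [cos_angle, hb, one_mul, lt_div_iff₀ (norm_pos_iff.2 hp), mul_comm]
    exact h
  exact hcos.not_ge (cos_le_cos_of_nonneg_of_le_pi hφ (angle_le_pi b p) hle)

theorem norm_sub_sq_le_of_angle_lt {b p q : F} {φ : ℝ} (hφ : φ ≤ π / 2)
    (hp : angle b p < φ) (hq : angle b q < φ) :
    ‖p - q‖ ^ 2 ≤ ‖p‖ ^ 2 + ‖q‖ ^ 2 - 2 * ‖p‖ * ‖q‖ * cos (2 * φ) := by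
  have hpq : angle p q ≤ 2 * φ := by
    linarith [angle_le_angle_add_angle p b q, angle_comm p b]
  have hcos : cos (2 * φ) ≤ cos (angle p q) :=
    cos_le_cos_of_nonneg_of_le_pi (angle_nonneg p q) (by linarith) hpq
  have := norm_sub_sq_eq_norm_sq_add_norm_sq_sub_two_mul_norm_mul_norm_mul_cos_angle p q
  nlinarith [mul_nonneg (norm_nonneg p) (norm_nonneg q)]

theorem mul_two_mul_sub_le_two_mul_one_sub_norm {b z : F} {c : ℝ} (hb : ‖b‖ = 1)
    (h : ‖b - z‖ * c ≤ ⟪b, b - z⟫) : ‖b - z‖ * (2 * c - ‖b - z‖) ≤ 2 * (1 - ‖z‖) := by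
  have hz := norm_sub_sq_real b (b - z)
  rw [sub_sub_cancel, hb] at hz
  nlinarith [sq_nonneg (1 - ‖z‖)]

theorem norm_sub_le_of_mem_cone {a r φ : ℝ} {b x y : F} (ha : 0 ≤ a) (ha1 : a ≤ 1)
    (hr : 0 ≤ r) (hb : ‖b‖ = 1) (hφ : 0 ≤ φ) (hφ2 : φ ≤ π / 2) (hc : 0 < cos φ)
    (hx : ‖b - x‖ ∈ Set.Icc (a * r) r) (hy : ‖b - y‖ ∈ Set.Icc (a * r) r)
    (hxc : ‖b - x‖ * cos φ < ⟪b, b - x⟫) (hyc : ‖b - y‖ * cos φ < ⟪b, b - y⟫) :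
    ‖x - y‖ ≤ r * √((1 + a) ^ 2 * tan φ ^ 2 + (1 - a) ^ 2) := by
  have hdist := norm_sub_sq_le_of_angle_lt hφ2
    (angle_lt_of_norm_mul_cos_lt_inner hb hφ hyc) (angle_lt_of_norm_mul_cos_lt_inner hb hφ hxc)
  rw [sub_sub_sub_cancel_left] at hdist
  have hbox := sq_add_sq_sub_mul_cos_two_mul_le ha ha1 hc hy hx
  rw [← sqrt_sq hr, ← sqrt_mul (sq_nonneg r)]
  exact le_sqrt_of_sq_le (by linarith)

end Cone

theorem stmt3_general (n : ℕ) (b : EuclideanSpace ℝ (Fin n)) (hb : ‖b‖ = 1)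
    (φ r a : ℝ) (hφ : φ ∈ Set.Ioo 0 (π / 2)) (hr : r ∈ Set.Ioo 0 (Real.cos φ))
    (ha : a ∈ Set.Ioo (0 : ℝ) 1)
    (C : Set (EuclideanSpace ℝ (Fin n)))
    (hC : C = {x | ‖b - x‖ * Real.cos φ < inner ℝ b (b - x)} ∩ ball b (Real.cos φ))
    (R : Set (EuclideanSpace ℝ (Fin n)))
    (hR : R = (ball b r \ closedBall b (a * r)) ∩ C)
    (u : ℝ) (hu : u = Real.sqrt ((1 + a) ^ 2 * Real.tan φ ^ 2 + (1 - a) ^ 2)) :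
    ∀ x ∈ R, ∀ y ∈ R,
      Real.log (1 + ‖x - y‖ / min (1 - ‖x‖) (1 - ‖y‖)) ≤
        Real.log (1 + (2 + a * r) * u / (a * (2 * Real.cos φ - a * r))) := by
  obtain ⟨hφ0, hφ2⟩ := hφ
  obtain ⟨hr0, hrc⟩ := hr
  obtain ⟨ha0, ha1⟩ := ha
  have hc : 0 < cos φ := cos_pos_of_mem_Ioo ⟨by linarith, hφ2⟩
  have hmem : ∀ z ∈ R, ‖b - z‖ ∈ Set.Ioo (a * r) r ∧ ‖b - z‖ * cos φ < ⟪b, b - z⟫ := by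
    rintro z hz
    simp only [hR, hC, Set.mem_inter_iff, Set.mem_sdiff, mem_ball, mem_closedBall,
      dist_comm z b, dist_eq_norm, not_le, Set.mem_ofPred_eq] at hz
    exact ⟨⟨hz.1.2, hz.1.1⟩, hz.2.1⟩
  have hgap : ∀ z ∈ R, a * r * (2 * cos φ - a * r) ≤ 2 * (1 - ‖z‖) := fun z hz => by
    obtain ⟨⟨hs1, hs2⟩, hcone⟩ := hmem z hz
    nlinarith [mul_two_mul_sub_le_two_mul_one_sub_norm hb hcone.le]
  intro x hx y hy
  obtain ⟨⟨hx1, hx2⟩, hxc⟩ := hmem x hx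
  obtain ⟨⟨hy1, hy2⟩, hyc⟩ := hmem y hy
  have hchord : ‖x - y‖ ≤ r * u := hu ▸ norm_sub_le_of_mem_cone ha0.le ha1.le hr0.le hb hφ0.le
    hφ2.le hc ⟨hx1.le, hx2.le⟩ ⟨hy1.le, hy2.le⟩ hxc hyc
  have hmin : a * r * (2 * cos φ - a * r) / 2 ≤ min (1 - ‖x‖) (1 - ‖y‖) :=
    le_min (by linarith [hgap x hx]) (by linarith [hgap y hy])
  have hden : 0 < 2 * cos φ - a * r := by linarith [mul_lt_of_lt_one_left hr0 ha1]
  have hpos : 0 < a * r * (2 * cos φ - a * r) / 2 := by positivity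
  have hu0 : 0 ≤ u := hu ▸ sqrt_nonneg _
  refine log_le_log (add_pos_of_pos_of_nonneg one_pos
    (div_nonneg (norm_nonneg _) (hpos.trans_le hmin).le)) (add_le_add_right ?_ 1)
  calc ‖x - y‖ / min (1 - ‖x‖) (1 - ‖y‖)
      ≤ r * u / (a * r * (2 * cos φ - a * r) / 2) := div_le_div₀ (by positivity) hchord hpos hmin
    _ = 2 * u / (a * (2 * cos φ - a * r)) := by field_simp
    _ ≤ (2 + a * r) * u / (a * (2 * cos φ - a * r)) := by
      gcongr ?_ * u / _
      linarith [mul_pos ha0 hr0]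

/-- Diameter bound for `R(b,φ,ar,r)` in the distance ratio metric `j_{𝔹ⁿ}`. -/
theorem stmt3 (n : ℕ) (hn : 2 ≤ n) (b : EuclideanSpace ℝ (Fin n)) (hb : ‖b‖ = 1)
    (φ r a : ℝ) (hφ : φ ∈ Set.Ioo 0 (π / 2)) (hr : r ∈ Set.Ioo 0 (Real.cos φ))
    (ha : a ∈ Set.Ioo (0 : ℝ) 1)
    (C : Set (EuclideanSpace ℝ (Fin n)))
    (hC : C = {x | ‖b - x‖ * Real.cos φ < inner ℝ b (b - x)} ∩ ball b (Real.cos φ))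
    (R : Set (EuclideanSpace ℝ (Fin n)))
    (hR : R = (ball b r \ closedBall b (a * r)) ∩ C)
    (u : ℝ) (hu : u = Real.sqrt ((1 + a) ^ 2 * Real.tan φ ^ 2 + (1 - a) ^ 2)) :
    ∀ x ∈ R, ∀ y ∈ R,
      Real.log (1 + ‖x - y‖ / min (1 - ‖x‖) (1 - ‖y‖)) ≤
        Real.log (1 + (2 + a * r) * u / (a * (2 * Real.cos φ - a * r))) :=
  stmt3_general n b hb φ r a hφ hr ha C hC R hR u hu
end

section
/- Let $b\in S^{n-1}$, $\varphi\in(0,\pi/2)$, and $x\in C(b,\varphi)$ with $r:=|x-b|\in(0,\cos\varphi)$. Then $\rho(0,x) \leq s(r,\varphi) := \log\Big(\frac{(2+r)^2}{r(2\cos\varphi - r)}\Big)$, where $\rho(0,x)=\log\frac{1+|x|}{1-|x|}$. -/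
/-!
Since `‖b‖ = 1`, expanding `‖x‖² = ‖b - (b - x)‖²` and using the cone condition
`r cos φ < ⟪b, b - x⟫` gives `1 - ‖x‖² > r (2 cos φ - r)`. Hence
`(1 + ‖x‖) / (1 - ‖x‖) = (1 + ‖x‖)² / (1 - ‖x‖²) < 4 / (r (2 cos φ - r))`, and `4 ≤ (2 + r)²`.
-/

open Real Metric

lemma norm_sq_lt_of_norm_sub_mul_lt_inner {E : Type*} [NormedAddCommGroup E]
    [InnerProductSpace ℝ E] {b x : E} (hb : ‖b‖ = 1) {c : ℝ}
    (h : ‖b - x‖ * c < inner ℝ b (b - x)) :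
    ‖x‖ ^ 2 < 1 - ‖b - x‖ * (2 * c - ‖b - x‖) := by
  have hexp := norm_sub_sq_real b (b - x)
  rw [sub_sub_cancel, hb] at hexp
  linarith

lemma one_add_div_one_sub_lt_of_sq_lt {a t : ℝ} (ha : 0 ≤ a) (ht : 0 < t) (h : a ^ 2 < 1 - t) :
    (1 + a) / (1 - a) < 4 / t := by
  have ha1 : a < 1 := by nlinarith
  rw [div_lt_div_iff₀ (by linarith) ht]
  nlinarith [mul_pos (by linarith : (0 : ℝ) < 1 + a) ht]

theorem stmt6_general (n : ℕ) (b : EuclideanSpace ℝ (Fin n)) (hb : ‖b‖ = 1)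
    (φ : ℝ)
    (C : Set (EuclideanSpace ℝ (Fin n)))
    (hC : C = {x | ‖b - x‖ * Real.cos φ < inner ℝ b (b - x)} ∩ ball b (Real.cos φ))
    (x : EuclideanSpace ℝ (Fin n)) (hx : x ∈ C)
    (r : ℝ) (hr : r = ‖x - b‖) (hr' : r ∈ Set.Ioo 0 (Real.cos φ)) :
    Real.log ((1 + ‖x‖) / (1 - ‖x‖)) ≤
      Real.log ((2 + r) ^ 2 / (r * (2 * Real.cos φ - r))) := by
  obtain ⟨hr0, hrc⟩ := hr'
  rw [hC] at hx
  have hr_eq : ‖b - x‖ = r := by rw [hr, norm_sub_rev]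
  have hsq := norm_sq_lt_of_norm_sub_mul_lt_inner hb hx.1
  rw [hr_eq] at hsq
  have ht : 0 < r * (2 * Real.cos φ - r) := mul_pos hr0 (by linarith)
  have hlt := one_add_div_one_sub_lt_of_sq_lt (norm_nonneg x) ht hsq
  have hx1 : ‖x‖ < 1 := by nlinarith [norm_nonneg x]
  apply Real.log_le_log (div_pos (by positivity) (by linarith))
  calc (1 + ‖x‖) / (1 - ‖x‖) ≤ 4 / (r * (2 * Real.cos φ - r)) := hlt.le
    _ ≤ (2 + r) ^ 2 / (r * (2 * Real.cos φ - r)) := by gcongr; nlinarith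

/-- For `x ∈ C(b,φ)` with `r = |x−b| ∈ (0, cos φ)`,
`ρ(0,x) = log((1+|x|)/(1−|x|)) ≤ s(r,φ) = log((2+r)²/(r(2cos φ − r)))`. -/
theorem stmt6 (n : ℕ) (hn : 2 ≤ n) (b : EuclideanSpace ℝ (Fin n)) (hb : ‖b‖ = 1)
    (φ : ℝ) (hφ : φ ∈ Set.Ioo 0 (π / 2))
    (C : Set (EuclideanSpace ℝ (Fin n)))
    (hC : C = {x | ‖b - x‖ * Real.cos φ < inner ℝ b (b - x)} ∩ ball b (Real.cos φ))
    (x : EuclideanSpace ℝ (Fin n)) (hx : x ∈ C)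
    (r : ℝ) (hr : r = ‖x - b‖) (hr' : r ∈ Set.Ioo 0 (Real.cos φ)) :
    Real.log ((1 + ‖x‖) / (1 - ‖x‖)) ≤
      Real.log ((2 + r) ^ 2 / (r * (2 * Real.cos φ - r))) :=
  stmt6_general n b hb φ C hC x hx r hr hr'
end

section
/- Let $b\in S^{n-1}$, $\varphi\in(0,\pi/2)$, $x\in C(b,\varphi)$ with $r=|x-b|\in(0,\cos\varphi)$, and let $s(r,\varphi)=\log\big(\frac{(2+r)^2}{r(2\cos\varphi-r)}\big)$. Then for each $y = tb$ with $0<t<1-r$ one has $\rho(x,y)\leq s(r,\varphi)$. -/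
open Real Metric

set_option maxHeartbeats 1000000 in
/-- The segment `L(r) = {tb : 0 < t < 1−r}` lies in the hyperbolic ball of radius
`s(r,φ) = log((2+r)²/(r(2cos φ − r)))` centered at `x ∈ C(b,φ)` with `r = |x−b|`:
for each `y = t b` with `0 < t < 1−r` one has `ρ(x,y) ≤ s(r,φ)`. Here `ρ` is the
hyperbolic metric of the unit ball, characterized by its `sinh²` formula,
nonnegativity, symmetry and the triangle inequality. -/
theorem stmt9 (n : ℕ) (hn : 2 ≤ n) (b : EuclideanSpace ℝ (Fin n)) (hb : ‖b‖ = 1)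
    (φ : ℝ) (hφ : φ ∈ Set.Ioo 0 (π / 2))
    (C : Set (EuclideanSpace ℝ (Fin n)))
    (hC : C = {x | ‖b - x‖ * Real.cos φ < inner ℝ b (b - x)} ∩ ball b (Real.cos φ))
    (x : EuclideanSpace ℝ (Fin n)) (hx : x ∈ C)
    (r : ℝ) (hr : r = ‖x - b‖) (hr' : r ∈ Set.Ioo 0 (Real.cos φ))
    (ρ : EuclideanSpace ℝ (Fin n) → EuclideanSpace ℝ (Fin n) → ℝ)
    (hρ : ∀ y z, y ∈ ball (0 : EuclideanSpace ℝ (Fin n)) 1 →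
      z ∈ ball (0 : EuclideanSpace ℝ (Fin n)) 1 →
      Real.sinh (ρ y z / 2) ^ 2 = ‖y - z‖ ^ 2 / ((1 - ‖y‖ ^ 2) * (1 - ‖z‖ ^ 2)))
    (hρ_nonneg : ∀ y z, y ∈ ball (0 : EuclideanSpace ℝ (Fin n)) 1 →
      z ∈ ball (0 : EuclideanSpace ℝ (Fin n)) 1 → 0 ≤ ρ y z)
    (hρ_symm : ∀ y z, y ∈ ball (0 : EuclideanSpace ℝ (Fin n)) 1 →
      z ∈ ball (0 : EuclideanSpace ℝ (Fin n)) 1 → ρ y z = ρ z y)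
    (hρ_triangle : ∀ y z w, y ∈ ball (0 : EuclideanSpace ℝ (Fin n)) 1 →
      z ∈ ball (0 : EuclideanSpace ℝ (Fin n)) 1 →
      w ∈ ball (0 : EuclideanSpace ℝ (Fin n)) 1 → ρ y w ≤ ρ y z + ρ z w) :
    ∀ t : ℝ, 0 < t → t < 1 - r →
      ρ x (t • b) ≤ Real.log ((2 + r) ^ 2 / (r * (2 * Real.cos φ - r))) := by
  intro t ht0 htr
  obtain ⟨hφ0, hφ2⟩ := hφ
  obtain ⟨hr0, hrφ⟩ := hr'
  have hcos : 0 < Real.cos φ := Real.cos_pos_of_mem_Ioo ⟨by linarith [Real.pi_pos], hφ2⟩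
  have hcos1 : Real.cos φ ≤ 1 := Real.cos_le_one φ
  have hr1 : r < 1 := lt_of_lt_of_le hrφ hcos1
  set D : ℝ := r * (2 * Real.cos φ - r) with hDdef
  set Q : ℝ := (2 + r) ^ 2 with hQdef
  have hD0 : 0 < D := mul_pos hr0 (by linarith)
  have hQ0 : (0:ℝ) < Q := by positivity
  have hQ4 : (4:ℝ) ≤ Q := by nlinarith
  rw [hC] at hx
  obtain ⟨hx1, hx2⟩ := hx
  have hbx : ‖b - x‖ = r := by rw [hr, norm_sub_rev]
  rw [Set.mem_setOf_eq, hbx] at hx1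
  have hIle : (inner ℝ b (b - x) : ℝ) ≤ r := by
    calc (inner ℝ b (b - x) : ℝ) ≤ ‖b‖ * ‖b - x‖ := real_inner_le_norm _ _
      _ = r := by rw [hb, hbx, one_mul]
  have hinbx : (inner ℝ b (b - x) : ℝ) = 1 - inner ℝ b x := by
    rw [inner_sub_right, real_inner_self_eq_norm_sq, hb]; norm_num
  have hxsq : 1 - ‖x‖ ^ 2 = 2 * inner ℝ b (b - x) - r ^ 2 := by
    have h1 : ‖b - x‖ ^ 2 = ‖b‖ ^ 2 - 2 * inner ℝ b x + ‖x‖ ^ 2 := norm_sub_sq_real b x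
    rw [hbx, hb] at h1
    rw [hinbx]; nlinarith [h1]
  have hDx : D < 1 - ‖x‖ ^ 2 := by rw [hxsq]; nlinarith [hx1]
  have hxb : 1 - r ≤ (inner ℝ x b : ℝ) := by
    rw [real_inner_comm]; linarith [hIle, hinbx]
  have hxlt : ‖x‖ ^ 2 < 1 - D := by linarith
  have hxball : x ∈ ball (0 : EuclideanSpace ℝ (Fin n)) 1 := by
    rw [mem_ball_zero_iff]
    nlinarith [norm_nonneg x, hD0]
  have hynorm : ‖t • b‖ = t := by
    rw [norm_smul, hb, Real.norm_eq_abs, abs_of_pos ht0, mul_one]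
  have ht1 : t < 1 := by linarith
  have hyball : t • b ∈ ball (0 : EuclideanSpace ℝ (Fin n)) 1 := by
    rw [mem_ball_zero_iff, hynorm]; exact ht1
  have hN : ‖x - t • b‖ ^ 2 = ‖x‖ ^ 2 - 2 * (t * inner ℝ x b) + t ^ 2 := by
    have h1 : ‖x - t • b‖ ^ 2 = ‖x‖ ^ 2 - 2 * inner ℝ x (t • b) + ‖t • b‖ ^ 2 :=
      norm_sub_sq_real x (t • b)
    rw [real_inner_smul_right, hynorm] at h1
    exact h1
  have ht2 : 0 < 1 - t ^ 2 := by
    have h : 0 < (1 - t) * (1 + t) := mul_pos (by linarith) (by linarith)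
    nlinarith [h]
  -- sinh formula for the target radius
  have hQD0 : 0 < Q / D := div_pos hQ0 hD0
  have hS : Real.sinh (Real.log (Q / D) / 2) ^ 2 = (Q - D) ^ 2 / (4 * Q * D) := by
    have h1 : Real.cosh (2 * (Real.log (Q / D) / 2)) =
        Real.cosh (Real.log (Q / D) / 2) ^ 2 + Real.sinh (Real.log (Q / D) / 2) ^ 2 :=
      Real.cosh_two_mul _
    have h2 : Real.cosh (Real.log (Q / D) / 2) ^ 2 =
        Real.sinh (Real.log (Q / D) / 2) ^ 2 + 1 := Real.cosh_sq _
    rw [show 2 * (Real.log (Q / D) / 2) = Real.log (Q / D) by ring,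
      Real.cosh_log hQD0] at h1
    have e1 : Real.sinh (Real.log (Q / D) / 2) ^ 2 = ((Q / D + (Q / D)⁻¹) / 2 - 1) / 2 := by
      linarith
    rw [e1, inv_div]
    field_simp
    ring
  -- key polynomial facts
  have hK : 2 * (2 + r) ≤ Q - D := by nlinarith [hcos1, hr0]
  have hK2 : 4 * Q ≤ (Q - D) ^ 2 := by nlinarith [hK, hr0]
  have hNle : ‖x - t • b‖ ^ 2 ≤ (1 - D) - 2 * t * (1 - r) + t ^ 2 := by
    rw [hN]
    nlinarith [mul_le_mul_of_nonneg_left hxb (by linarith : (0:ℝ) ≤ 2 * t), hxlt]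
  have hchain : ‖x - t • b‖ ^ 2 / ((1 - ‖x‖ ^ 2) * (1 - t ^ 2)) ≤ (Q - D) ^ 2 / (4 * Q * D) := by
    have hd1 : 0 < D * (1 - t ^ 2) := mul_pos hD0 ht2
    have hd2 : 0 < (1 - ‖x‖ ^ 2) * (1 - t ^ 2) := mul_pos (by linarith) ht2
    have step1 : ‖x - t • b‖ ^ 2 / ((1 - ‖x‖ ^ 2) * (1 - t ^ 2)) ≤
        ‖x - t • b‖ ^ 2 / (D * (1 - t ^ 2)) := by
      apply div_le_div_of_nonneg_left (by positivity) hd1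
      exact mul_le_mul_of_nonneg_right hDx.le ht2.le
    refine step1.trans ?_
    rw [div_le_div_iff₀ hd1 (by positivity)]
    nlinarith [mul_le_mul_of_nonneg_left hNle (by positivity : (0:ℝ) ≤ 4 * Q * D),
      mul_nonneg hD0.le (mul_nonneg (by linarith : (0:ℝ) ≤ (Q - D) ^ 2 - 4 * Q) ht2.le),
      mul_pos hD0 hD0, hQ0,
      mul_nonneg (mul_nonneg (by positivity : (0:ℝ) ≤ 4 * Q * D) ht0.le)
        (by linarith : (0:ℝ) ≤ 1 - r - t)]
  -- conclude
  have hsinh := hρ x (t • b) hxball hyball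
  rw [hynorm] at hsinh
  have hsq : Real.sinh (ρ x (t • b) / 2) ^ 2 ≤ Real.sinh (Real.log (Q / D) / 2) ^ 2 := by
    rw [hsinh, hS]; exact hchain
  have hρ0 : 0 ≤ ρ x (t • b) := hρ_nonneg _ _ hxball hyball
  have hs0 : 0 ≤ Real.log (Q / D) := Real.log_nonneg (by
    rw [le_div_iff₀ hD0]; nlinarith)
  have p1 : 0 ≤ Real.sinh (ρ x (t • b) / 2) := Real.sinh_nonneg_iff.mpr (by linarith)
  have p2 : 0 ≤ Real.sinh (Real.log (Q / D) / 2) := Real.sinh_nonneg_iff.mpr (by linarith)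
  have hle : Real.sinh (ρ x (t • b) / 2) ≤ Real.sinh (Real.log (Q / D) / 2) := by
    nlinarith [hsq, p1, p2]
  have := Real.sinh_le_sinh.mp hle
  linarith
end
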